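/- arXiv:1806.05039 — 9 statements merged into one kernel-verified Lean document; each statement's English description precedes it below -/
import Mathlib

section
/- Let q ≥ 2 be an integer, let s ≥ q, and let c_1, …, c_s be units of ℤ/qℤ. Then there exists a subset J of {1, …, s} with 1 ∈ J such that ∑_{j∈J} c_j = 0 in ℤ/qℤ. -/
lemma closed_univ {q : ℕ} [NeZero q] (A : Finset (ZMod q)) (hA : A.Nonempty)
    (u : ZMod q) (hu : IsUnit u) (h : ∀ x ∈ A, x + u ∈ A) : ∀ x, x ∈ A := by
  obtain ⟨a, ha⟩ := hA
  have step : ∀ n : ℕ, a + n * u ∈ A := by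
    intro n
    induction n with
    | zero => simpa using ha
    | succ n ih =>
      have := h _ ih
      have e : a + (↑(n+1)) * u = a + n * u + u := by push_cast; ring
      rwa [e]
  intro x
  have key : a + ((u⁻¹ * (x - a)).val : ZMod q) * u = x := by
    rw [ZMod.natCast_val, ZMod.cast_id, mul_comm (u⁻¹) (x-a), mul_assoc,
      ZMod.inv_mul_of_unit u hu, mul_one]
    ring
  have := step (u⁻¹ * (x - a)).val
  rwa [key] at this

theorem stmt_0 (q s : ℕ) (hq : 2 ≤ q) (hs : q ≤ s)
    (c : Fin s → ZMod q) (hc : ∀ j, IsUnit (c j)) :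
    ∃ J : Finset (Fin s), (⟨0, by omega⟩ : Fin s) ∈ J ∧ ∑ j ∈ J, c j = 0 := by
  haveI : NeZero q := ⟨by omega⟩
  have h0 : 0 < s := by omega
  set i0 : Fin s := ⟨0, h0⟩ with hi0
  set Idx : ℕ → Finset (Fin s) := fun k => Finset.univ.filter (fun j => 0 < j.1 ∧ j.1 ≤ k)
    with hIdx
  set B : ℕ → Finset (ZMod q) := fun k => (Idx k).powerset.image (fun J => c i0 + ∑ j ∈ J, c j)
    with hB
  have memB : ∀ k x, x ∈ B k ↔ ∃ J ⊆ Idx k, c i0 + ∑ j ∈ J, c j = x := by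
    intro k x
    simp [hB, Finset.mem_image, Finset.mem_powerset]
  have Bmono : ∀ k, B k ⊆ B (k+1) := by
    intro k
    apply Finset.image_subset_image
    apply Finset.powerset_mono.2
    intro j hj
    simp only [hIdx, Finset.mem_filter, Finset.mem_univ, true_and] at hj ⊢
    omega
  have main : ∀ k, k + 1 ≤ s → min q (k + 1) ≤ (B k).card := by
    intro k
    induction k with
    | zero =>
      intro _
      have : c i0 ∈ B 0 := by
        rw [memB]
        exact ⟨∅, by simp⟩
      have := Finset.card_pos.2 ⟨_, this⟩
      omega
    | succ k ih =>
      intro hk1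
      have hk : k + 1 ≤ s := by omega
      have ihc := ih hk
      rcases le_or_gt q (k+1) with hle | hlt
      · have : min q (k+1) = q := by omega
        have hsub := Finset.card_le_card (Bmono k)
        omega
      · -- k + 1 < q, so card B k ≥ k + 1
        have hcard : k + 1 ≤ (B k).card := by omega
        set u : ZMod q := c ⟨k+1, by omega⟩ with hu
        by_cases hcl : ∀ x ∈ B k, x + u ∈ B k
        · have hne : (B k).Nonempty := ⟨c i0, by rw [memB]; exact ⟨∅, by simp⟩⟩
          have hall := closed_univ (B k) hne u (hc _) hcl
          have : (Finset.univ : Finset (ZMod q)) ⊆ B k := fun x _ => hall x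
          have hq' := Finset.card_le_card this
          rw [Finset.card_univ, ZMod.card] at hq'
          have hsub := Finset.card_le_card (Bmono k)
          omega
        · push_neg at hcl
          obtain ⟨x, hx, hxu⟩ := hcl
          rw [memB] at hx
          obtain ⟨J, hJ, hJx⟩ := hx
          have hnew : x + u ∈ B (k+1) := by
            rw [memB]
            refine ⟨insert ⟨k+1, by omega⟩ J, ?_, ?_⟩
            · intro j hj
              simp only [Finset.mem_insert] at hj
              simp only [hIdx, Finset.mem_filter, Finset.mem_univ, true_and]
              rcases hj with rfl | hj
              · simp
              · have := hJ hj
                simp only [hIdx, Finset.mem_filter, Finset.mem_univ, true_and] at this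
                omega
            · have hnotin : (⟨k+1, by omega⟩ : Fin s) ∉ J := by
                intro hmem
                have := hJ hmem
                simp only [hIdx, Finset.mem_filter, Finset.mem_univ, true_and] at this
                omega
              rw [Finset.sum_insert hnotin, ← hJx, hu]
              ring
          have hsub : insert (x + u) (B k) ⊆ B (k+1) := by
            intro y hy
            rcases Finset.mem_insert.1 hy with rfl | hy
            · exact hnew
            · exact Bmono k hy
          have := Finset.card_le_card hsub
          rw [Finset.card_insert_of_notMem hxu] at this
          omega
  have hfin := main (q - 1) (by omega)
  have : q ≤ (B (q-1)).card := by
    have : min q (q - 1 + 1) = q := by omega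
    omega
  have hall : (B (q-1)) = Finset.univ := by
    apply Finset.eq_univ_of_card
    have h2 := Finset.card_le_card (Finset.subset_univ (B (q-1)))
    rw [Finset.card_univ, ZMod.card] at h2
    rw [ZMod.card]
    omega
  have h0mem : (0 : ZMod q) ∈ B (q-1) := by rw [hall]; exact Finset.mem_univ _
  rw [memB] at h0mem
  obtain ⟨J, hJ, hJ0⟩ := h0mem
  refine ⟨insert i0 J, Finset.mem_insert_self _ _, ?_⟩
  have hnotin : i0 ∉ J := by
    intro hmem
    have := hJ hmem
    simp only [hIdx, Finset.mem_filter, Finset.mem_univ, true_and, hi0] at this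
    omega
  rw [Finset.sum_insert hnotin, hJ0]
end

section
/- Let p ≥ 3 be a prime, τ ≥ 0 an integer, and k = p^τ(p−1). Given a_1, …, a_p in 𝔽_p all nonzero, there exist x_1, …, x_p in 𝔽_p with x_1 = 1 and a_1 x_1^k + ⋯ + a_p x_p^k = 0. -/
/-!
Take every `x j ∈ {0, 1}`; since `k ≠ 0`, the sum becomes `∑ j ∈ T, a j` over the support `T`,
so it suffices that `-a 0` is a subset sum of the `p - 1` nonzero elements `a 1, …, a (p - 1)`.
The subset sums of `s` form the sumset `∑ i ∈ s, {0, a i}`, and by Cauchy–Davenport each factor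
`{0, a i}` enlarges the set by at least one element until it is all of `ZMod p`.
-/

open Finset
open scoped Pointwise

section SubsetSums

variable {ι G : Type*} [AddCommMonoid G] [DecidableEq G]

def subsetSums (a : ι → G) (s : Finset ι) : Finset G :=
  s.powerset.image fun t => ∑ j ∈ t, a j

theorem zero_mem_subsetSums (a : ι → G) (s : Finset ι) : 0 ∈ subsetSums a s :=
  mem_image.2 ⟨∅, empty_mem_powerset s, sum_empty⟩

theorem subsetSums_add_pair_subset [DecidableEq ι] (a : ι → G) {s : Finset ι} {i : ι}
    (hi : i ∉ s) :
    subsetSums a s + ({0, a i} : Finset G) ⊆ subsetSums a (insert i s) := by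
  intro y hy
  obtain ⟨x, hx, b, hb, rfl⟩ := mem_add.1 hy
  obtain ⟨t, ht, rfl⟩ := mem_image.1 hx
  have hts : t ⊆ s := mem_powerset.1 ht
  rcases mem_insert.1 hb with rfl | hb
  · exact mem_image.2 ⟨t, mem_powerset.2 (hts.trans (subset_insert i s)), (add_zero _).symm⟩
  · rw [mem_singleton.1 hb]
    refine mem_image.2 ⟨insert i t, mem_powerset.2 (insert_subset_insert i hts), ?_⟩
    rw [sum_insert fun hit => hi (hts hit), add_comm]

end SubsetSums

namespace ZMod

variable {ι : Type*} [DecidableEq ι] {p : ℕ} [Fact p.Prime]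

theorem min_card_add_one_le_card_subsetSums (a : ι → ZMod p) (s : Finset ι)
    (ha : ∀ i ∈ s, a i ≠ 0) : min p (#s + 1) ≤ #(subsetSums a s) := by
  induction s using Finset.induction_on with
  | empty => exact (min_le_right _ _).trans (card_pos.2 ⟨0, zero_mem_subsetSums a ∅⟩)
  | @insert i s hi ih =>
    have ih := ih fun j hj => ha j (mem_insert_of_mem hj)
    have hpair : #({0, a i} : Finset (ZMod p)) = 2 :=
      card_pair (ha i (mem_insert_self i s)).symm
    have hcd := cauchy_davenport Fact.out ⟨0, zero_mem_subsetSums a s⟩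
      (insert_nonempty 0 {a i})
    have hsub := card_le_card (subsetSums_add_pair_subset a hi)
    rw [card_insert_of_notMem hi]
    omega

theorem subsetSums_eq_univ (a : ι → ZMod p) {s : Finset ι}
    (ha : ∀ i ∈ s, a i ≠ 0) (hs : p - 1 ≤ #s) : subsetSums a s = univ := by
  apply eq_univ_of_card
  have hlow := min_card_add_one_le_card_subsetSums a s ha
  have hup : #(subsetSums a s) ≤ p := (card_le_univ _).trans (card p).le
  rw [card p]
  omega

end ZMod

theorem sum_mul_indicator_pow {ι R : Type*} [Fintype ι] [DecidableEq ι] [Semiring R]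
    (a : ι → R) (T : Finset ι) {k : ℕ} (hk : k ≠ 0) :
    ∑ j, a j * (if j ∈ T then 1 else 0) ^ k = ∑ j ∈ T, a j := by
  simp only [ite_pow, one_pow, zero_pow hk, mul_ite, mul_one, mul_zero, sum_ite_mem, univ_inter]

theorem stmt_2 (p : ℕ) (hp : p.Prime) (hp3 : 3 ≤ p) (τ k : ℕ)
    (hk : k = p ^ τ * (p - 1)) (a : Fin p → ZMod p) (ha : ∀ j, a j ≠ 0) :
    ∃ x : Fin p → ZMod p, x ⟨0, by omega⟩ = 1 ∧ ∑ j, a j * x j ^ k = 0 := by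
  have : Fact p.Prime := ⟨hp⟩
  set i₀ : Fin p := ⟨0, by omega⟩
  have hk0 : k ≠ 0 := by
    rw [hk]
    exact mul_ne_zero (pow_ne_zero _ hp.ne_zero) (by omega)
  have hsums : subsetSums a (univ.erase i₀) = univ :=
    ZMod.subsetSums_eq_univ a (fun j _ => ha j) (by simp)
  have hmem : -a i₀ ∈ subsetSums a (univ.erase i₀) := hsums ▸ mem_univ _
  obtain ⟨t, ht, hsum⟩ := mem_image.1 hmem
  have hi₀t : i₀ ∉ t := fun h => (mem_erase.1 (mem_powerset.1 ht h)).1 rfl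
  refine ⟨fun j => if j ∈ insert i₀ t then 1 else 0, by simp, ?_⟩
  rw [sum_mul_indicator_pow a _ hk0, sum_insert hi₀t, hsum, add_neg_cancel]
end

section
/- Let p ≥ 3 be a prime, τ ≥ 0, and k = p^τ(p−1). Suppose a_1, …, a_{p−1} ∈ 𝔽_p are all nonzero and the equation a_1 x_1^k + ⋯ + a_{p−1} x_{p−1}^k = 0 has only the trivial solution x_1 = ⋯ = x_{p−1} = 0 in 𝔽_p. Then a_1 = a_2 = ⋯ = a_{p−1}. -/
open Finset

def psums {p : ℕ} {ι : Type*} [DecidableEq ι] (a : ι → ZMod p) (S : Finset ι) :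
    Finset (ZMod p) :=
  (S.powerset.filter (·.Nonempty)).image (fun T => ∑ t ∈ T, a t)

lemma mem_psums {p : ℕ} {ι : Type*} [DecidableEq ι] {a : ι → ZMod p} {S : Finset ι}
    {x : ZMod p} : x ∈ psums a S ↔ ∃ T, T ⊆ S ∧ T.Nonempty ∧ ∑ t ∈ T, a t = x := by
  simp only [psums, mem_image, mem_filter, mem_powerset]
  tauto

lemma sums_card_aux (p : ℕ) [Fact p.Prime] {ι : Type*} [DecidableEq ι] (a : ι → ZMod p)
    (H : ∀ S : Finset ι, S.Nonempty → ∑ t ∈ S, a t ≠ 0)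
    {i j : ι} (hij : i ≠ j) (hab : a i ≠ a j) :
    ∀ S : Finset ι, i ∈ S → j ∈ S → S.card + 1 ≤ (psums a S).card := by
  intro S
  induction S using Finset.strongInduction with
  | _ S IH =>
    intro hi hj
    have mem_sums : ∀ (S' : Finset ι) (T : Finset ι), T ⊆ S' → T.Nonempty →
        (∑ t ∈ T, a t) ∈ psums a S' := by
      intro S' T hTS hTne
      exact mem_psums.mpr ⟨T, hTS, hTne, rfl⟩
    by_cases hbig : ∃ l ∈ S, l ≠ i ∧ l ≠ j
    · obtain ⟨l, hlS, hli, hlj⟩ := hbig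
      set S' := S.erase l with hS'
      have hsub : S' ⊂ S := erase_ssubset hlS
      have hi' : i ∈ S' := mem_erase.mpr ⟨fun h => hli h.symm, hi⟩
      have hj' : j ∈ S' := mem_erase.mpr ⟨fun h => hlj h.symm, hj⟩
      have hIH := IH S' hsub hi' hj'
      have hmono : psums a S' ⊆ psums a S := by
        intro x hx
        obtain ⟨T, hT1, hT2, hT3⟩ := mem_psums.mp hx
        exact mem_psums.mpr ⟨T, hT1.trans hsub.subset, hT2, hT3⟩
      have hnew : ∃ x ∈ psums a S, x ∉ psums a S' := by
        by_cases hal : a l ∈ psums a S'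
        · by_cases hcl : ∀ s ∈ psums a S', s + a l ∈ psums a S'
          · exfalso
            have hmul : ∀ n : ℕ, ((n + 1 : ℕ) : ZMod p) * a l ∈ psums a S' := by
              intro n
              induction n with
              | zero => simpa using hal
              | succ m ihm =>
                have h2 : ((m + 1 + 1 : ℕ) : ZMod p) * a l
                    = ((m + 1 : ℕ) : ZMod p) * a l + a l := by push_cast; ring
                rw [h2]
                exact hcl _ ihm
            have h0 := hmul (p - 1)
            have hp1 : ((p - 1 + 1 : ℕ) : ZMod p) = 0 := by
              have : p - 1 + 1 = p := Nat.succ_pred_eq_of_pos (Fact.out : p.Prime).pos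
              rw [this, ZMod.natCast_self]
            rw [hp1, zero_mul] at h0
            obtain ⟨T, hT1, hT2, hT3⟩ := mem_psums.mp h0
            exact H T hT2 hT3
          · push_neg at hcl
            obtain ⟨s, hs, hsl⟩ := hcl
            obtain ⟨T, hT1, hT2, hT3⟩ := mem_psums.mp hs
            have hlT : l ∉ T := fun h => (mem_erase.mp (hT1 h)).1 rfl
            refine ⟨s + a l, ?_, hsl⟩
            have hsum : ∑ t ∈ insert l T, a t = s + a l := by
              rw [sum_insert hlT, hT3]; ring
            rw [← hsum]
            apply mem_sums
            · intro x hx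
              rcases mem_insert.mp hx with rfl | hx
              · exact hlS
              · exact hsub.subset (hT1 hx)
            · exact insert_nonempty _ _
        · refine ⟨a l, ?_, hal⟩
          have : ∑ t ∈ {l}, a t = a l := by simp
          rw [← this]
          exact mem_sums S {l} (singleton_subset_iff.mpr hlS) (singleton_nonempty l)
      obtain ⟨x, hxS, hxS'⟩ := hnew
      have hlt : (psums a S').card < (psums a S).card :=
        card_lt_card ((ssubset_iff_of_subset hmono).mpr ⟨x, hxS, hxS'⟩)
      have hcard : S.card = S'.card + 1 := by
        have hpos : 0 < S.card := card_pos.mpr ⟨i, hi⟩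
        rw [hS', card_erase_of_mem hlS]
        omega
      omega
    · push_neg at hbig
      have hSij : S = {i, j} := by
        apply Subset.antisymm
        · intro x hx
          rcases eq_or_ne x i with rfl | hxi
          · exact mem_insert_self _ _
          rcases eq_or_ne x j with rfl | hxj
          · exact mem_insert_of_mem (mem_singleton_self _)
          · exact absurd (hbig x hx hxi) hxj
        · intro x hx
          rcases mem_insert.mp hx with rfl | hx
          · exact hi
          · rw [mem_singleton.mp hx]; exact hj
      have hai : a i ≠ 0 := by
        have := H {i} (singleton_nonempty i); simpa using this
      have haj : a j ≠ 0 := by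
        have := H {j} (singleton_nonempty j); simpa using this
      have h3 : ({a i, a j, a i + a j} : Finset (ZMod p)) ⊆ psums a S := by
        intro x hx
        rcases mem_insert.mp hx with rfl | hx
        · have : ∑ t ∈ {i}, a t = a i := by simp
          rw [← this]; exact mem_sums S {i} (singleton_subset_iff.mpr hi) (singleton_nonempty i)
        rcases mem_insert.mp hx with rfl | hx
        · have : ∑ t ∈ {j}, a t = a j := by simp
          rw [← this]; exact mem_sums S {j} (singleton_subset_iff.mpr hj) (singleton_nonempty j)
        · rw [mem_singleton.mp hx]
          have : ∑ t ∈ ({i, j} : Finset ι), a t = a i + a j := by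
            rw [sum_insert (by simpa using hij), sum_singleton]
          rw [← this]
          refine mem_sums S {i, j} ?_ ⟨i, mem_insert_self _ _⟩
          intro x hx
          rcases mem_insert.mp hx with rfl | hx
          · exact hi
          · rw [mem_singleton.mp hx]; exact hj
      have hc3 : ({a i, a j, a i + a j} : Finset (ZMod p)).card = 3 := by
        rw [card_insert_of_notMem, card_insert_of_notMem, card_singleton]
        · simp only [mem_singleton]
          intro h
          exact hai (by linear_combination -h)
        · simp only [mem_insert, mem_singleton]
          push_neg
          exact ⟨hab, fun h => haj (by linear_combination -h)⟩
      have hScard : S.card = 2 := by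
        rw [hSij, card_insert_of_notMem (by simpa using hij), card_singleton]
      have := card_le_card h3
      omega

theorem stmt_3 (p : ℕ) (hp : p.Prime) (hp3 : 3 ≤ p) (τ k : ℕ)
    (hk : k = p ^ τ * (p - 1)) (a : Fin (p - 1) → ZMod p) (ha : ∀ j, a j ≠ 0)
    (htriv : ∀ x : Fin (p - 1) → ZMod p, ∑ j, a j * x j ^ k = 0 → x = 0) :
    ∀ i j, a i = a j := by
  haveI : Fact p.Prime := ⟨hp⟩
  have hk0 : k ≠ 0 := by
    have h1 : 1 ≤ p ^ τ := Nat.one_le_pow _ _ hp.pos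
    simp only [hk]
    have : 2 ≤ p - 1 := by omega
    positivity
  have H : ∀ S : Finset (Fin (p - 1)), S.Nonempty → ∑ t ∈ S, a t ≠ 0 := by
    intro S hS hsum
    set x : Fin (p - 1) → ZMod p := fun j => if j ∈ S then 1 else 0 with hx
    have hx0 : ∑ j, a j * x j ^ k = 0 := by
      have heq : ∀ j, a j * x j ^ k = if j ∈ S then a j else 0 := by
        intro j
        by_cases hj : j ∈ S <;> simp [hx, hj, zero_pow hk0]
      rw [Finset.sum_congr rfl (fun j _ => heq j), Finset.sum_ite_mem,
        Finset.univ_inter, hsum]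
    have hx00 := htriv x hx0
    obtain ⟨j, hj⟩ := hS
    have : x j = 0 := congrFun hx00 j
    rw [hx] at this
    simp [hj] at this
  by_contra hne
  push_neg at hne
  obtain ⟨i, j, hab⟩ := hne
  have hij : i ≠ j := fun h => hab (h ▸ rfl)
  have hkey := sums_card_aux p a H hij hab Finset.univ (Finset.mem_univ i) (Finset.mem_univ j)
  have hc1 : (Finset.univ : Finset (Fin (p - 1))).card = p - 1 := by simp
  have hsub0 : psums a Finset.univ ⊆ Finset.univ.erase (0 : ZMod p) := by
    intro x hx
    obtain ⟨T, hT1, hT2, hT3⟩ := mem_psums.mp hx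
    exact Finset.mem_erase.mpr ⟨hT3 ▸ H T hT2, Finset.mem_univ _⟩
  have hle : (psums a Finset.univ).card ≤ p - 1 := by
    have := Finset.card_le_card hsub0
    rwa [Finset.card_erase_of_mem (Finset.mem_univ _), Finset.card_univ, ZMod.card] at this
  rw [hc1] at hkey
  omega
end

section
/- Let p ≥ 3 be a prime. Let a_1, …, a_p and c be nonzero elements of 𝔽_p, and let b_1, …, b_p ∈ 𝔽_p. Then the system ∑_{j=1}^p a_j x_j^{p−1} = 0, c·y + ∑_{j=1}^p b_j x_j = 0 has a solution (x_1, …, x_p, y) ∈ 𝔽_p^{p+1} at which the 2×2 Jacobian minor with respect to the variables x_1 and y is nonzero; in particular one may take x_1 = 1, making the minor equal to (p−1)·a_1·c ≠ 0. -/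
open Finset Pointwise

lemma key_subset_sums {p : ℕ} (hp : p.Prime) (a : Fin p → ZMod p) (s : Finset (Fin p))
    (ha : ∀ j ∈ s, a j ≠ 0) :
    ∃ S : Finset (ZMod p), min p (s.card + 1) ≤ S.card ∧
      ∀ t ∈ S, ∃ g : Fin p → ZMod p, (∀ j, g j = 0 ∨ g j = a j) ∧
        (∀ j, j ∉ s → g j = 0) ∧ ∑ j ∈ s, g j = t := by
  classical
  induction s using Finset.induction_on with
  | empty =>
      refine ⟨{0}, by simp, ?_⟩
      intro t ht
      simp only [Finset.mem_singleton] at ht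
      exact ⟨fun _ => 0, fun j => Or.inl rfl, fun j _ => rfl, by simp [ht]⟩
  | @insert i s hi ih =>
      obtain ⟨S, hScard, hSmem⟩ := ih (fun j hj => ha j (Finset.mem_insert_of_mem hj))
      have hai : a i ≠ 0 := ha i (Finset.mem_insert_self i s)
      refine ⟨S + ({0, a i} : Finset (ZMod p)), ?_, ?_⟩
      · have hSne : S.Nonempty := by
          rw [← Finset.card_pos]
          have : 0 < min p (s.card + 1) := by
            have := hp.pos; omega
          omega
        have hcd := ZMod.cauchy_davenport hp hSne (Finset.insert_nonempty 0 {a i})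
        have hcard2 : ({0, a i} : Finset (ZMod p)).card = 2 := by
          rw [Finset.card_insert_of_notMem (by simpa using hai.symm)]
          simp
        rw [hcard2] at hcd
        rw [Finset.card_insert_of_notMem hi]
        omega
      · intro t ht
        rw [Finset.mem_add] at ht
        obtain ⟨u, hu, v, hv, huv⟩ := ht
        obtain ⟨g, hg1, hg2, hg3⟩ := hSmem u hu
        refine ⟨Function.update g i v, ?_, ?_, ?_⟩
        · intro j
          rcases eq_or_ne j i with rfl | hj
          · simp only [Function.update_self]
            simp only [Finset.mem_insert, Finset.mem_singleton] at hv
            tauto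
          · simpa [Function.update_of_ne hj] using hg1 j
        · intro j hj
          have hji : j ≠ i := fun h => hj (h ▸ Finset.mem_insert_self i s)
          rw [Function.update_of_ne hji]
          exact hg2 j (fun h => hj (Finset.mem_insert_of_mem h))
        · rw [Finset.sum_insert hi, Function.update_self]
          have hrw : ∑ x ∈ s, Function.update g i v x = ∑ x ∈ s, g x :=
            Finset.sum_congr rfl fun j hj =>
              Function.update_of_ne (by rintro rfl; exact hi hj) _ _
          rw [hrw, hg3, ← huv]
          ring

theorem stmt_5 (p : ℕ) (hp : p.Prime) (hp3 : 3 ≤ p)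
    (a : Fin p → ZMod p) (ha : ∀ j, a j ≠ 0) (c : ZMod p) (hc : c ≠ 0)
    (b : Fin p → ZMod p) :
    ∃ (x : Fin p → ZMod p) (y : ZMod p),
      (∑ j, a j * x j ^ (p - 1)) = 0 ∧ c * y + ∑ j, b j * x j = 0 ∧
      x ⟨0, by omega⟩ = 1 ∧
      ((p - 1 : ZMod p) * a ⟨0, by omega⟩ * x ⟨0, by omega⟩ ^ (p - 2)) * c -
        0 * b ⟨0, by omega⟩ ≠ 0 := by
  classical
  haveI : Fact p.Prime := ⟨hp⟩
  set i0 : Fin p := ⟨0, by omega⟩ with hi0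
  obtain ⟨S, hScard, hSmem⟩ := key_subset_sums hp a (Finset.univ.erase i0)
    (fun j _ => ha j)
  have hcard : (Finset.univ.erase i0).card = p - 1 := by
    rw [Finset.card_erase_of_mem (Finset.mem_univ _), Finset.card_univ, Fintype.card_fin]
  have hSuniv : S = Finset.univ := by
    rw [hcard] at hScard
    have h1 : p ≤ S.card := by omega
    have h2 : S.card ≤ p := by simpa [ZMod.card p] using S.card_le_univ
    apply Finset.eq_univ_of_card
    rw [ZMod.card p]
    omega
  obtain ⟨g, hg1, hg2, hg3⟩ := hSmem (-(a i0)) (hSuniv ▸ Finset.mem_univ _)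
  set x : Fin p → ZMod p := fun j => if j = i0 then 1 else if g j = 0 then 0 else 1 with hx
  have hx0 : x i0 = 1 := by simp [hx]
  have hp1 : p - 1 ≠ 0 := by omega
  refine ⟨x, -(c⁻¹ * ∑ j, b j * x j), ?_, ?_, hx0, ?_⟩
  · have hsplit : (∑ j, a j * x j ^ (p - 1)) =
        a i0 * x i0 ^ (p - 1) + ∑ j ∈ Finset.univ.erase i0, a j * x j ^ (p - 1) := by
      rw [← Finset.sum_erase_add _ _ (Finset.mem_univ i0)]; ring
    rw [hsplit, hx0, one_pow]
    have : ∑ j ∈ Finset.univ.erase i0, a j * x j ^ (p - 1)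
        = ∑ j ∈ Finset.univ.erase i0, g j := by
      apply Finset.sum_congr rfl
      intro j hj
      have hji : j ≠ i0 := Finset.ne_of_mem_erase hj
      rcases hg1 j with h0 | hgj
      · simp [hx, hji, h0, zero_pow hp1]
      · have hgz : g j ≠ 0 := hgj ▸ ha j
        simp only [hx, if_neg hji, if_neg hgz, one_pow, mul_one]
        exact hgj.symm
    rw [this, hg3]
    ring
  · rw [mul_neg, ← mul_assoc, mul_inv_cancel₀ hc, one_mul]
    ring
  · rw [hx0, one_pow, mul_one, zero_mul, sub_zero]
    have hpz : (p : ZMod p) = 0 := ZMod.natCast_self p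
    rw [hpz, zero_sub, neg_mul, neg_mul, neg_ne_zero, one_mul]
    exact mul_ne_zero (ha i0) hc
end

section
/- Let p ≥ 5 be a prime. Let a_1, …, a_{p+2} be nonzero elements of 𝔽_p and b_1, …, b_{p+2} ∈ 𝔽_p with at least one b_j ≠ 0. Then the system ∑_{j=1}^{p+2} a_j x_j^{p−1} = 0, ∑_{j=1}^{p+2} b_j x_j = 0 has a non-singular solution in 𝔽_p^{p+2}, i.e., a solution at which some 2×2 minor of the Jacobian matrix of the two forms is nonzero. -/
/-!
Over `𝔽_p`, `x ^ (p - 1)` is the indicator of `x ≠ 0`, so the first equation says that the `a_j`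
sum to zero over the support `S` of `x`. If `b_k ≠ 0` for some `k ∉ S`, then `x_k = 0` and the
minor at `(i, k)` for `i ∈ S` is `-a_i x_i ^ (p - 2) b_k ≠ 0`. It therefore suffices to find a
nonempty zero-sum set `S ∌ k` carrying a solution of `∑ b_j x_j = 0` with support exactly `S`.

By Cauchy–Davenport, `n` nonzero elements of `𝔽_p` have at least `min p (n + 1)` subset sums, so
any `p - 1` of them realise every residue. If at least `p` of the `b_j` vanish, `S` is taken inside
their zero set and `x` is its indicator. Otherwise two indices `m₀, m₁ ≠ k` have
`b_{m₀}, b_{m₁} ≠ 0`; then `S ⊇ {m₀, m₁}` and the linear equation has a nowhere-zero solution on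
`S`, because `𝔽_p` has more than two elements.
-/

open Finset Pointwise

theorem image_sum_powerset_insert {ι G : Type*} [DecidableEq ι] [AddCommMonoid G] [DecidableEq G]
    (a : ι → G) {U : Finset ι} {u : ι} (hu : u ∉ U) :
    (insert u U).powerset.image (fun T => ∑ j ∈ T, a j) =
      U.powerset.image (fun T => ∑ j ∈ T, a j) + {0, a u} := by
  ext z
  simp only [mem_add, mem_image, mem_powerset, mem_insert, mem_singleton]
  constructor
  · rintro ⟨T, hT, rfl⟩
    by_cases huT : u ∈ T
    · refine ⟨_, ⟨T.erase u, ?_, rfl⟩, a u, Or.inr rfl, sum_erase_add _ _ huT⟩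
      exact fun j hj => (mem_insert.1 (hT (mem_of_mem_erase hj))).resolve_left (ne_of_mem_erase hj)
    · exact ⟨_, ⟨T, (subset_insert_iff_of_notMem huT).1 hT, rfl⟩, 0, Or.inl rfl, add_zero _⟩
  · rintro ⟨_, ⟨T, hT, rfl⟩, t, rfl | rfl, rfl⟩
    · exact ⟨T, hT.trans (subset_insert _ _), (add_zero _).symm⟩
    · exact ⟨insert u T, insert_subset_insert _ hT, by rw [sum_insert fun h => hu (hT h), add_comm]⟩

theorem ZMod.min_le_card_image_sum_powerset {p : ℕ} [Fact p.Prime] {ι : Type*} [DecidableEq ι]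
    (a : ι → ZMod p) (U : Finset ι) (ha : ∀ j ∈ U, a j ≠ 0) :
    min p (#U + 1) ≤ #(U.powerset.image fun T => ∑ j ∈ T, a j) := by
  induction U using Finset.induction_on with
  | empty => simp
  | @insert u U hu ih =>
    have hpair : #({0, a u} : Finset (ZMod p)) = 2 :=
      card_pair (ha u (mem_insert_self u U)).symm
    have := ZMod.cauchy_davenport (Fact.out : p.Prime)
      (s := U.powerset.image fun T => ∑ j ∈ T, a j) (t := {0, a u})
      (image_nonempty.2 (powerset_nonempty U)) (insert_nonempty _ _)
    rw [image_sum_powerset_insert a hu, card_insert_of_notMem hu]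
    have := ih fun j hj => ha j (mem_insert_of_mem hj)
    omega

theorem ZMod.exists_subset_sum_eq {p : ℕ} [Fact p.Prime] {ι : Type*} [DecidableEq ι]
    (a : ι → ZMod p) {U : Finset ι} (ha : ∀ j ∈ U, a j ≠ 0) (hU : p ≤ #U + 1) (c : ZMod p) :
    ∃ T ⊆ U, ∑ j ∈ T, a j = c := by
  have hcard := ZMod.min_le_card_image_sum_powerset a U ha
  rw [min_eq_left hU] at hcard
  have huniv : (U.powerset.image fun T => ∑ j ∈ T, a j) = univ :=
    eq_univ_of_card _ ((card_le_univ _).antisymm (by rwa [ZMod.card]))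
  have hc : c ∈ U.powerset.image fun T => ∑ j ∈ T, a j := huniv ▸ mem_univ c
  simpa only [mem_image, mem_powerset] using hc

theorem ZMod.exists_superset_sum_eq_zero {p : ℕ} [Fact p.Prime] {ι : Type*} [DecidableEq ι]
    (a : ι → ZMod p) {R V : Finset ι} (hRV : R ⊆ V) (ha : ∀ j ∈ V, a j ≠ 0)
    (hcard : p + #R ≤ #V + 1) :
    ∃ S, R ⊆ S ∧ S ⊆ V ∧ ∑ j ∈ S, a j = 0 := by
  obtain ⟨T, hT, hTsum⟩ := ZMod.exists_subset_sum_eq a (U := V \ R)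
    (fun j hj => ha j (sdiff_subset hj)) (by rw [card_sdiff_of_subset hRV]; omega) (-∑ j ∈ R, a j)
  refine ⟨R ∪ T, subset_union_left, union_subset hRV (hT.trans sdiff_subset), ?_⟩
  rw [sum_union (disjoint_of_subset_right hT disjoint_sdiff), hTsum, add_neg_cancel]

theorem exists_support_eq_sum_mul_eq_zero {K ι : Type*} [Field K] [Fintype K] [Fintype ι]
    [DecidableEq ι] (hK : 2 < Fintype.card K) (b : ι → K) {S : Finset ι} {m₀ m₁ : ι}
    (hm₀ : m₀ ∈ S) (hm₁ : m₁ ∈ S) (hm : m₀ ≠ m₁) (hb₀ : b m₀ ≠ 0) (hb₁ : b m₁ ≠ 0) :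
    ∃ x : ι → K, (∀ j, x j ≠ 0 ↔ j ∈ S) ∧ ∑ j, b j * x j = 0 := by
  classical
  set c := ∑ j ∈ (S.erase m₀).erase m₁, b j with hc
  obtain ⟨v, -, hv⟩ := exists_mem_notMem_of_card_lt_card (s := {0, -c / b m₁})
    (t := univ) (card_le_two.trans_lt hK)
  rw [mem_insert, mem_singleton, not_or, eq_div_iff hb₁] at hv
  set u := -(c + b m₁ * v) / b m₀
  have hu : u ≠ 0 := div_ne_zero (neg_ne_zero.2 fun h => hv.2 (by linear_combination h)) hb₀
  refine ⟨fun j => if j = m₀ then u else if j = m₁ then v else if j ∈ S then 1 else 0, ?_, ?_⟩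
  · intro j
    by_cases h₀ : j = m₀
    · simp [h₀, hu, hm₀]
    by_cases h₁ : j = m₁
    · simp [h₁, hv.1, hm₁, hm.symm]
    · simp [h₀, h₁]
  · rw [← sum_subset (subset_univ S) fun j _ hj => by
      simp [hj, (ne_of_mem_of_not_mem hm₀ hj).symm, (ne_of_mem_of_not_mem hm₁ hj).symm],
      ← add_sum_erase S _ hm₀, ← add_sum_erase _ _ (mem_erase.2 ⟨hm.symm, hm₁⟩),
      sum_congr (g := b) rfl fun j hj => by
        simp [ne_of_mem_erase hj, ne_of_mem_erase (mem_of_mem_erase hj),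
          mem_of_mem_erase (mem_of_mem_erase hj)]]
    simp only [if_pos, if_neg hm.symm, ← hc, u]
    field_simp
    ring

theorem ZMod.sum_mul_pow_card_sub_one_eq_sum {p : ℕ} [Fact p.Prime] {ι : Type*} [Fintype ι]
    (a x : ι → ZMod p) {S : Finset ι} (hx : ∀ j, x j ≠ 0 ↔ j ∈ S) :
    ∑ j, a j * x j ^ (p - 1) = ∑ j ∈ S, a j := by
  classical
  have hp : p - 1 ≠ 0 := Nat.sub_ne_zero_of_lt (Fact.out : p.Prime).one_lt
  rw [← sum_subset (subset_univ S) fun j _ hj => by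
    rw [not_ne_iff.1 ((hx j).not.2 hj), zero_pow hp, mul_zero]]
  exact sum_congr rfl fun j hj => by rw [ZMod.pow_card_sub_one_eq_one ((hx j).2 hj), mul_one]

theorem ZMod.exists_zero_sum_support_avoiding {p : ℕ} [Fact p.Prime] (hp : 3 ≤ p)
    {ι : Type*} [Fintype ι] [DecidableEq ι] (hι : p + 2 ≤ Fintype.card ι) (a b : ι → ZMod p)
    (ha : ∀ j, a j ≠ 0) {k : ι} (hk : b k ≠ 0) :
    ∃ S : Finset ι, k ∉ S ∧ S.Nonempty ∧ ∑ j ∈ S, a j = 0 ∧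
      ∃ x : ι → ZMod p, (∀ j, x j ≠ 0 ↔ j ∈ S) ∧ ∑ j, b j * x j = 0 := by
  by_cases hZ : p ≤ #(univ.filter fun j => b j = 0)
  · obtain ⟨u, hu⟩ : (univ.filter fun j => b j = 0).Nonempty := card_pos.1 (by omega)
    obtain ⟨S, huS, hSZ, hSa⟩ := ZMod.exists_superset_sum_eq_zero a (singleton_subset_iff.2 hu)
      (fun j _ => ha j) (by rw [card_singleton]; omega)
    refine ⟨S, fun h => hk (mem_filter.1 (hSZ h)).2, ⟨u, singleton_subset_iff.1 huS⟩, hSa,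
      fun j => if j ∈ S then 1 else 0, fun j => by simp, ?_⟩
    simp only [mul_ite, mul_one, mul_zero, sum_ite_mem, univ_inter]
    exact sum_eq_zero fun j hj => (mem_filter.1 (hSZ hj)).2
  · have hB : 1 < #((univ.filter fun j => b j ≠ 0).erase k) := by
      rw [card_erase_of_mem (by simpa using hk)]
      have := card_filter_add_card_filter_not (s := univ) fun j => b j = 0
      rw [card_univ] at this
      simp only [ne_eq]
      omega
    obtain ⟨m₀, hm₀, m₁, hm₁, hm⟩ := one_lt_card.1 hB
    simp only [mem_erase, mem_filter, mem_univ, true_and] at hm₀ hm₁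
    obtain ⟨S, hRS, hSV, hSa⟩ := ZMod.exists_superset_sum_eq_zero a (R := {m₀, m₁})
      (V := univ.erase k) (by simp [insert_subset_iff, hm₀.1, hm₁.1]) (fun j _ => ha j)
      (by rw [card_pair hm, card_erase_of_mem (mem_univ k), card_univ]; omega)
    obtain ⟨x, hx, hbx⟩ := exists_support_eq_sum_mul_eq_zero (by rw [ZMod.card]; omega) b
      (hRS (mem_insert_self _ _)) (hRS (mem_insert_of_mem (mem_singleton_self _))) hm hm₀.2 hm₁.2
    exact ⟨S, fun h => notMem_erase k univ (hSV h), ⟨m₀, hRS (mem_insert_self _ _)⟩, hSa,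
      x, hx, hbx⟩

theorem stmt_7 (p : ℕ) (hp : p.Prime) (hp5 : 5 ≤ p)
    (a b : Fin (p + 2) → ZMod p) (ha : ∀ j, a j ≠ 0) (hb : ∃ j, b j ≠ 0) :
    ∃ x : Fin (p + 2) → ZMod p,
      (∑ j, a j * x j ^ (p - 1)) = 0 ∧ (∑ j, b j * x j) = 0 ∧
      ∃ i j, ((p - 1 : ZMod p) * a i * x i ^ (p - 2)) * b j -
             ((p - 1 : ZMod p) * a j * x j ^ (p - 2)) * b i ≠ 0 := by
  have : Fact p.Prime := ⟨hp⟩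
  obtain ⟨k, hk⟩ := hb
  obtain ⟨S, hkS, ⟨i, hi⟩, hSa, x, hx, hbx⟩ :=
    ZMod.exists_zero_sum_support_avoiding (by omega) (by simp) a b ha hk
  refine ⟨x, by rw [ZMod.sum_mul_pow_card_sub_one_eq_sum a x hx, hSa], hbx, i, k, ?_⟩
  have hp1 : (p - 1 : ZMod p) ≠ 0 := by
    rw [ZMod.natCast_self, zero_sub]
    exact neg_ne_zero.2 one_ne_zero
  have hxk : x k = 0 := not_ne_iff.1 ((hx k).not.2 hkS)
  rw [hxk, zero_pow (by omega), mul_zero, zero_mul, sub_zero]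
  exact mul_ne_zero (mul_ne_zero (mul_ne_zero hp1 (ha i)) (pow_ne_zero _ ((hx i).2 hi))) hk
end

section
/- Let k ≥ 1 and p be a prime, and let Γ*(k,p) be the smallest t such that every diagonal equation c_1 x_1^k + ⋯ + c_t x_t^k = 0 with integer coefficients has a nonzero solution in ℚ_p^t. If s ≥ 2·Γ*(k,p), then for any integers a_1,…,a_s, b_1,…,b_s, the system a_1 x_1^k + ⋯ + a_s x_s^k = 0, b_1 x_1 + ⋯ + b_s x_s = 0 has a solution in ℚ_p^s different from the zero vector. -/
theorem stmt_11 (p : ℕ) [Fact p.Prime] (k : ℕ) (hk : 1 ≤ k) (t : ℕ)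
    (hΓ : ∀ c : Fin t → ℤ, ∃ x : Fin t → ℚ_[p], x ≠ 0 ∧
      ∑ j, (c j : ℚ_[p]) * x j ^ k = 0)
    (s : ℕ) (hs : 2 * t ≤ s) (a b : Fin s → ℤ) :
    ∃ x : Fin s → ℚ_[p], x ≠ 0 ∧
      (∑ j, (a j : ℚ_[p]) * x j ^ k) = 0 ∧ (∑ j, (b j : ℚ_[p]) * x j) = 0 := by
  classical
  rcases Nat.eq_zero_or_pos t with rfl | ht
  · obtain ⟨y, hy, -⟩ := hΓ 0
    exact absurd (funext fun i => i.elim0) hy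
  have h1 : ∀ i : Fin t, (i : ℕ) < s := fun i => lt_of_lt_of_le (by omega) hs
  have h2 : ∀ i : Fin t, t + (i : ℕ) < s := fun i => lt_of_lt_of_le (by omega) hs
  set e1 : Fin t → Fin s := fun i => ⟨i, h1 i⟩ with he1
  set e2 : Fin t → Fin s := fun i => ⟨t + i, h2 i⟩ with he2
  set u : Fin t → ℤ := fun i => if b (e1 i) = 0 ∧ b (e2 i) = 0 then 1 else b (e2 i) with hu
  set v : Fin t → ℤ := fun i => if b (e1 i) = 0 ∧ b (e2 i) = 0 then 0 else -(b (e1 i)) with hv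
  set c : Fin t → ℤ := fun i => a (e1 i) * u i ^ k + a (e2 i) * v i ^ k with hc
  obtain ⟨y, hy, hsum⟩ := hΓ c
  set x : Fin s → ℚ_[p] := fun j =>
    if h : (j : ℕ) < t then (u ⟨j, h⟩ : ℚ_[p]) * y ⟨j, h⟩
    else if h' : (j : ℕ) < 2 * t then
      (v ⟨(j : ℕ) - t, by omega⟩ : ℚ_[p]) * y ⟨(j : ℕ) - t, by omega⟩
    else 0 with hx
  have hx1 : ∀ i : Fin t, x (e1 i) = (u i : ℚ_[p]) * y i := by
    intro i
    simp only [hx]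
    rw [dif_pos (show ((e1 i : Fin s) : ℕ) < t from i.2)]
  have hx2 : ∀ i : Fin t, x (e2 i) = (v i : ℚ_[p]) * y i := by
    intro i
    have hlt : ¬ ((e2 i : Fin s) : ℕ) < t := by simp [he2]
    have hlt2 : ((e2 i : Fin s) : ℕ) < 2 * t := by
      have := i.2; simp only [he2]; omega
    simp only [hx]
    rw [dif_neg hlt, dif_pos hlt2]
    have : (⟨((e2 i : Fin s) : ℕ) - t, by omega⟩ : Fin t) = i := by
      apply Fin.ext; simp [he2]
    rw [this]
  have hx0 : ∀ j : Fin s, ¬ ((j : ℕ) < 2 * t) → x j = 0 := by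
    intro j hj
    simp only [hx]
    rw [dif_neg (by omega), dif_neg hj]
  have key : ∀ f : Fin s → ℚ_[p], (∀ j : Fin s, ¬ ((j : ℕ) < 2 * t) → f j = 0) →
      ∑ j, f j = ∑ i, (f (e1 i) + f (e2 i)) := by
    intro f hf
    have hinj1 : Function.Injective e1 := fun i j h =>
      Fin.ext (by simpa [he1] using congrArg Fin.val h)
    have hinj2 : Function.Injective e2 := fun i j h => by
      have := congrArg Fin.val h
      simp only [he2] at this
      exact Fin.ext (by omega)
    have hdisj : Disjoint (Finset.image e1 Finset.univ) (Finset.image e2 Finset.univ) := by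
      simp only [Finset.disjoint_left, Finset.mem_image]
      rintro j ⟨i, -, rfl⟩ ⟨i', -, h⟩
      have := congrArg Fin.val h
      simp only [he1, he2] at this
      omega
    rw [← Finset.sum_subset (Finset.subset_univ
        (Finset.image e1 Finset.univ ∪ Finset.image e2 Finset.univ))]
    · rw [Finset.sum_union hdisj, Finset.sum_image (fun i _ j _ h => hinj1 h),
        Finset.sum_image (fun i _ j _ h => hinj2 h), ← Finset.sum_add_distrib]
    · intro j _ hj
      apply hf
      intro hlt
      apply hj
      simp only [Finset.mem_union, Finset.mem_image]
      rcases lt_or_ge (j : ℕ) t with h | h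
      · exact Or.inl ⟨⟨j, h⟩, Finset.mem_univ _, Fin.ext rfl⟩
      · refine Or.inr ⟨⟨(j : ℕ) - t, by omega⟩, Finset.mem_univ _, Fin.ext ?_⟩
        simp only [he2]
        omega
  have huv : ∀ i : Fin t, u i ≠ 0 ∨ v i ≠ 0 := by
    intro i
    simp only [hu, hv]
    split_ifs with h
    · exact Or.inl one_ne_zero
    · rcases Classical.em (b (e2 i) = 0) with h2' | h2'
      · exact Or.inr (neg_ne_zero.mpr fun h1' => h ⟨h1', h2'⟩)
      · exact Or.inl h2'
  obtain ⟨i0, hi0⟩ := Function.ne_iff.mp hy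
  refine ⟨x, ?_, ?_, ?_⟩
  · intro h0
    rcases huv i0 with hu' | hv'
    · have : x (e1 i0) = 0 := congrFun h0 (e1 i0)
      rw [hx1 i0] at this
      exact mul_ne_zero (Int.cast_ne_zero.mpr hu') hi0 this
    · have : x (e2 i0) = 0 := congrFun h0 (e2 i0)
      rw [hx2 i0] at this
      exact mul_ne_zero (Int.cast_ne_zero.mpr hv') hi0 this
  · rw [key (fun j => (a j : ℚ_[p]) * x j ^ k)
      (fun j hj => by show (a j : ℚ_[p]) * x j ^ k = 0; rw [hx0 j hj, zero_pow (by omega : k ≠ 0), mul_zero])]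
    · rw [← hsum]
      apply Finset.sum_congr rfl
      intro i _
      rw [hx1 i, hx2 i, hc]
      push_cast
      ring
  · rw [key (fun j => (b j : ℚ_[p]) * x j) (fun j hj => by show (b j : ℚ_[p]) * x j = 0; rw [hx0 j hj, mul_zero])]
    have hbz : ∀ i : Fin t, b (e1 i) * u i + b (e2 i) * v i = 0 := by
      intro i
      simp only [hu, hv]
      split_ifs with h
      · simp [h.1]
      · ring
    apply Finset.sum_eq_zero
    intro i _
    have : ((b (e1 i) * u i + b (e2 i) * v i : ℤ) : ℚ_[p]) * y i = 0 := by
      rw [hbz i]; simp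
    rw [hx1 i, hx2 i]
    calc (b (e1 i) : ℚ_[p]) * ((u i : ℚ_[p]) * y i) + (b (e2 i) : ℚ_[p]) * ((v i : ℚ_[p]) * y i)
        = ((b (e1 i) * u i + b (e2 i) * v i : ℤ) : ℚ_[p]) * y i := by push_cast; ring
      _ = 0 := this
end

section
/- Let a_1, …, a_9, b_1, …, b_9, c_1, c_2, c_3, d_1, d_2, d_3 be integers with none of the a_i, c_j, d_l divisible by 3. Then there exist integers x_1, …, x_9, y_1, y_2, y_3, with not all x_i divisible by 3, satisfying a_1 x_1^6 + ⋯ + a_9 x_9^6 + 3(c_1 y_1^6 + c_2 y_2^6 + c_3 y_3^6) ≡ 0 (mod 9) and b_1 x_1 + ⋯ + b_9 x_9 + d_1 y_1 + d_2 y_2 + d_3 y_3 ≡ 0 (mod 3). -/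
/-!
Take every `xᵢ ∈ {0, 1}`, so that `xᵢ⁶ = xᵢ`: since nine residues modulo 9 always have a nonempty
sub-sum divisible by 9 (pigeonhole on prefix sums), a suitable nonempty support makes
`∑ aᵢ xᵢ⁶ ≡ 0 (mod 9)`. It then remains to make `∑ cⱼ yⱼ⁶ ≡ 0 (mod 3)` while `∑ dⱼ yⱼ` hits a
prescribed residue mod 3, a finite problem over `ZMod 3` in which `y⁶ = y²`.
-/

open Finset

theorem exists_nonempty_sum_eq_zero_of_card_le {G : Type*} [AddCommGroup G] [Fintype G]
    {n : ℕ} (hn : Fintype.card G ≤ n) (f : Fin n → G) :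
    ∃ s : Finset (Fin n), s.Nonempty ∧ ∑ i ∈ s, f i = 0 := by
  let below (m : Fin (n + 1)) : Finset (Fin n) := univ.filter fun i => (i : ℕ) < m
  obtain ⟨j, k, hne, heq⟩ := Fintype.exists_ne_map_eq_of_card_lt
    (fun m => ∑ i ∈ below m, f i) (by simpa [Nat.lt_succ_iff] using hn)
  wlog hjk : j < k generalizing j k
  · exact this k j hne.symm heq.symm (lt_of_le_of_ne (not_lt.1 hjk) hne.symm)
  have hsub : below j ⊆ below k :=
    fun i hi => by simp only [below, mem_filter, mem_univ, true_and] at hi ⊢; omega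
  refine ⟨below k \ below j, ⟨⟨j, by omega⟩, by simp [below, hjk]⟩, ?_⟩
  rw [sum_sdiff_eq_sub hsub, sub_eq_zero]
  exact heq.symm

/- Among three nonzero `cⱼ` either two sum to zero or all three are equal; make the corresponding
`yⱼ` nonzero, and their free signs let the linear form reach any `t`. -/
theorem ZMod.exists_sq_sum_eq_zero_and_linear_eq (c₀ c₁ c₂ d₀ d₁ d₂ t : ZMod 3)
    (hc₀ : c₀ ≠ 0) (hc₁ : c₁ ≠ 0) (hc₂ : c₂ ≠ 0) (hd₀ : d₀ ≠ 0) (hd₁ : d₁ ≠ 0) (hd₂ : d₂ ≠ 0) :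
    ∃ y₀ y₁ y₂ : ZMod 3, c₀ * y₀ ^ 2 + c₁ * y₁ ^ 2 + c₂ * y₂ ^ 2 = 0 ∧
      d₀ * y₀ + d₁ * y₁ + d₂ * y₂ = t := by
  revert c₀ c₁ c₂ d₀ d₁ d₂ t
  decide

theorem ZMod.pow_six_eq_sq_three (z : ZMod 3) : z ^ 6 = z ^ 2 := by
  rw [show 6 = 3 * 2 by rfl, pow_mul, ZMod.pow_card]

theorem stmt_13_general (a b : Fin 9 → ℤ) (c d : Fin 3 → ℤ)
    (hc : ∀ j, ¬ (3 : ℤ) ∣ c j)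
    (hd : ∀ l, ¬ (3 : ℤ) ∣ d l) :
    ∃ (x : Fin 9 → ℤ) (y : Fin 3 → ℤ),
      (∃ i, ¬ (3 : ℤ) ∣ x i) ∧
      ((9 : ℤ) ∣ (∑ i, a i * x i ^ 6) + 3 * (∑ j, c j * y j ^ 6)) ∧
      ((3 : ℤ) ∣ (∑ i, b i * x i) + (∑ j, d j * y j)) := by
  obtain ⟨s, ⟨i₀, hi₀⟩, hs⟩ := exists_nonempty_sum_eq_zero_of_card_le (G := ZMod 9) (n := 9)
    le_rfl fun i => (a i : ZMod 9)
  let x : Fin 9 → ℤ := fun i => if i ∈ s then 1 else 0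
  have hc' j : (c j : ZMod 3) ≠ 0 := mt (ZMod.intCast_zmod_eq_zero_iff_dvd _ 3).1 (hc j)
  have hd' l : (d l : ZMod 3) ≠ 0 := mt (ZMod.intCast_zmod_eq_zero_iff_dvd _ 3).1 (hd l)
  obtain ⟨y₀, y₁, y₂, hquad, hlin⟩ := ZMod.exists_sq_sum_eq_zero_and_linear_eq
    (c 0) (c 1) (c 2) (d 0) (d 1) (d 2) (-(∑ i, b i * x i : ℤ))
    (hc' 0) (hc' 1) (hc' 2) (hd' 0) (hd' 1) (hd' 2)
  let y : Fin 3 → ℤ := fun j => (![y₀, y₁, y₂] j).cast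
  refine ⟨x, y, ⟨i₀, by simp [x, hi₀]⟩, dvd_add ?_ ?_, ?_⟩
  · refine (ZMod.intCast_zmod_eq_zero_iff_dvd _ 9).1 ?_
    simpa [x, sum_ite_mem] using hs
  · rw [show (9 : ℤ) = 3 * 3 by rfl]
    refine mul_dvd_mul_left 3 ((ZMod.intCast_zmod_eq_zero_iff_dvd _ 3).1 ?_)
    simpa [y, Fin.sum_univ_three, ZMod.pow_six_eq_sq_three] using hquad
  · refine (ZMod.intCast_zmod_eq_zero_iff_dvd _ 3).1 ?_
    push_cast
    simp [y, Fin.sum_univ_three, hlin]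

theorem stmt_13 (a b : Fin 9 → ℤ) (c d : Fin 3 → ℤ)
    (ha : ∀ i, ¬ (3 : ℤ) ∣ a i) (hc : ∀ j, ¬ (3 : ℤ) ∣ c j)
    (hd : ∀ l, ¬ (3 : ℤ) ∣ d l) :
    ∃ (x : Fin 9 → ℤ) (y : Fin 3 → ℤ),
      (∃ i, ¬ (3 : ℤ) ∣ x i) ∧
      ((9 : ℤ) ∣ (∑ i, a i * x i ^ 6) + 3 * (∑ j, c j * y j ^ 6)) ∧
      ((3 : ℤ) ∣ (∑ i, b i * x i) + (∑ j, d j * y j)) :=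
  stmt_13_general a b c d hc hd
end

section
/- Let p be an odd prime, k = p(p−1), and let 1 ≤ t ≤ u with u ≥ p² + 2. Let c_1, …, c_u and d_1, …, d_t be integers not divisible by p. Then the pair of congruences c_1 x_1^k + ⋯ + c_u x_u^k ≡ 0 (mod p²) and d_1 x_1 + ⋯ + d_t x_t ≡ 0 (mod p) has a solution in integers x_1, …, x_u which is non-singular, i.e., there exist indices i, j such that p does not divide c_i x_i^{k−1} d_j − c_j x_j^{k−1} d_i (with the convention d_j = 0 for j > t). -/
/-!
Since `k = φ(p²)`, `x ^ k ≡ 0` or `1 (mod p²)` according as `p ∣ x` or not, so the first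
congruence only sees the set `U` of indices with `p ∤ xᵢ`: it holds iff
`∑_{i ∈ U} cᵢ ≡ 0 (mod p²)`. Subset sums of `u - 3 ≥ p² - 1` units mod `p²` attain every residue
(adjoining a unit enlarges the set of subset sums unless it is already everything), so `U` can be
chosen to avoid index `0` and to meet `[0, t)` in no index or in at least two. On `U ∩ [0, t)` the
linear congruence then has a solution in units mod `p`, and `xᵢ = p` off `U`. For `i ∈ U` the
minor at `(i, 0)` is `cᵢ xᵢ^(k-1) d₀` mod `p`, a unit.
-/

open Finset

namespace ZMod

variable {m : ℕ} [NeZero m]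

theorem eq_univ_of_forall_add_mem {A : Finset (ZMod m)} (hA : A.Nonempty) {a : ZMod m}
    (ha : IsUnit a) (h : ∀ x ∈ A, x + a ∈ A) : A = univ := by
  obtain ⟨x, hx⟩ := hA
  have hmem : ∀ n : ℕ, x + n * a ∈ A := by
    intro n
    induction n with
    | zero => simpa using hx
    | succ n ih => simpa [add_mul, add_assoc] using h _ ih
  obtain ⟨b, hba⟩ := ha.exists_left_inv
  refine eq_univ_of_forall fun y => ?_
  simpa [mul_assoc, hba] using hmem ((y - x) * b).val

variable {ι : Type*} [DecidableEq ι]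

theorem min_le_card_image_sum_powerset_s14 (c : ι → ZMod m) {T : Finset ι}
    (hT : ∀ i ∈ T, IsUnit (c i)) :
    min m (#T + 1) ≤ #(T.powerset.image fun S => ∑ i ∈ S, c i) := by
  induction T using Finset.induction_on with
  | empty => simp
  | @insert a T ha ih =>
    set F := T.powerset.image fun S => ∑ i ∈ S, c i
    have himage : (insert a T).powerset.image (fun S => ∑ i ∈ S, c i) =
        F ∪ F.image (· + c a) := by
      rw [powerset_insert, image_union, image_image, image_image]
      congr 1
      refine image_congr fun S hS => ?_
      simp only [Function.comp_apply]
      rw [sum_insert fun haS => ha (mem_powerset.mp hS haS), add_comm]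
    rw [himage, card_insert_of_notMem ha]
    by_cases hsub : F.image (· + c a) ⊆ F
    · have hF : F = univ := eq_univ_of_forall_add_mem ⟨0, mem_image.mpr ⟨∅, by simp⟩⟩
        (hT a (mem_insert_self a T)) fun s hs => hsub (mem_image_of_mem _ hs)
      simp [hF, ZMod.card]
    · have hlt : #F < #(F ∪ F.image (· + c a)) :=
        card_lt_card (Finset.ssubset_iff_subset_ne.mpr ⟨subset_union_left,
          fun h => hsub (union_eq_left.mp h.symm)⟩)
      have := ih fun i hi => hT i (mem_insert_of_mem hi)
      omega

theorem exists_subset_sum_eq_s14 (c : ι → ZMod m) {T : Finset ι} (hT : ∀ i ∈ T, IsUnit (c i))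
    (hcard : m ≤ #T + 1) (r : ZMod m) : ∃ S ⊆ T, ∑ i ∈ S, c i = r := by
  have h := min_le_card_image_sum_powerset_s14 c hT
  rw [min_eq_left hcard] at h
  have huniv : T.powerset.image (fun S => ∑ i ∈ S, c i) = univ :=
    eq_univ_of_card _ (le_antisymm (card_le_univ _) (by rwa [ZMod.card]))
  obtain ⟨S, hS, hSr⟩ := mem_image.mp (huniv ▸ mem_univ r)
  exact ⟨S, mem_powerset.mp hS, hSr⟩

end ZMod

theorem ZMod.isUnit_intCast_of_not_dvd {p : ℕ} (hp : p.Prime) (n : ℕ) {x : ℤ}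
    (hx : ¬ (p : ℤ) ∣ x) : IsUnit (x : ZMod (p ^ n)) := by
  have hcop : IsCoprime x ((p ^ n : ℕ) : ℤ) := by
    push_cast
    exact ((Nat.prime_iff_prime_int.mp hp).coprime_iff_not_dvd.mpr hx).symm.pow_right
  exact IsUnit.of_mul_eq_one _ (ZMod.coe_int_mul_inv_eq_one hcop)

theorem Nat.Prime.two_le_mul_pred {p : ℕ} (hp : p.Prime) : 2 ≤ p * (p - 1) :=
  Nat.mul_le_mul hp.two_le (Nat.le_sub_one_of_lt hp.one_lt)

theorem ZMod.intCast_pow_prime_mul_pred {p : ℕ} (hp : p.Prime) (x : ℤ) :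
    (x : ZMod (p ^ 2)) ^ (p * (p - 1)) = if (p : ℤ) ∣ x then 0 else 1 := by
  split_ifs with hx
  · obtain ⟨y, rfl⟩ := hx
    have hdvd : (p : ℤ) ^ 2 ∣ (p * y) ^ (p * (p - 1)) :=
      (pow_dvd_pow _ hp.two_le_mul_pred).trans (pow_dvd_pow_of_dvd (dvd_mul_right _ _) _)
    rw [← Int.cast_pow, ZMod.intCast_zmod_eq_zero_iff_dvd]
    exact_mod_cast hdvd
  · have hunit := ZMod.isUnit_intCast_of_not_dvd hp 2 hx
    have hφ : Nat.totient (p ^ 2) = p * (p - 1) := by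
      simpa using Nat.totient_prime_pow_succ hp 1
    rw [← hφ]
    have h := congrArg Units.val (ZMod.pow_totient hunit.unit)
    rwa [Units.val_pow_eq_pow_val, IsUnit.unit_spec, Units.val_one] at h

theorem sq_dvd_sum_mul_pow_of_support {ι : Type*} [Fintype ι] [DecidableEq ι] {p : ℕ} (hp : p.Prime)
    (c x : ι → ℤ) (U : Finset ι) (hU : ∀ i, i ∈ U ↔ ¬ (p : ℤ) ∣ x i)
    (hsum : ∑ i ∈ U, (c i : ZMod (p ^ 2)) = 0) :
    (p : ℤ) ^ 2 ∣ ∑ i, c i * x i ^ (p * (p - 1)) := by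
  have hcast : ((∑ i, c i * x i ^ (p * (p - 1)) : ℤ) : ZMod (p ^ 2)) = 0 := by
    calc ((∑ i, c i * x i ^ (p * (p - 1)) : ℤ) : ZMod (p ^ 2))
        = ∑ i, if i ∈ U then (c i : ZMod (p ^ 2)) else 0 := by
          push_cast
          refine sum_congr rfl fun i _ => ?_
          rw [ZMod.intCast_pow_prime_mul_pred hp]
          by_cases hi : i ∈ U
          · simp [hi, (hU i).mp hi]
          · simp [hi, not_not.mp ((hU i).not.mp hi)]
      _ = 0 := by rw [sum_ite_mem, univ_inter, hsum]
  exact_mod_cast (ZMod.intCast_zmod_eq_zero_iff_dvd _ _).mp hcast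

theorem exists_forall_ne_zero_sum_mul_eq_zero {K ι : Type*} [Field K] [DecidableEq ι]
    (h2 : (2 : K) ≠ 0) {V : Finset ι} {a : ι → K} (ha : ∀ i ∈ V, a i ≠ 0) (hV : #V ≠ 1) :
    ∃ y : ι → K, (∀ i, y i ≠ 0) ∧ ∑ i ∈ V, a i * y i = 0 := by
  rcases V.eq_empty_or_nonempty with rfl | hne
  · exact ⟨1, fun _ => one_ne_zero, by simp⟩
  obtain ⟨i, hi, j, hj, hij⟩ := one_lt_card.mp (by have := hne.card_pos; omega : 1 < #V)
  set s := ∑ l ∈ V, a l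
  -- off `{i, j}` the solution is `1`; the value at `j` is `1` or `2`, whichever keeps `y i ≠ 0`
  obtain ⟨e, he, hr⟩ : ∃ e : K, e ≠ 0 ∧ s - a i + a j * (e - 1) ≠ 0 := by
    by_cases h : s - a i = 0
    · exact ⟨2, h2, by rw [h]; norm_num; exact ha j hj⟩
    · exact ⟨1, one_ne_zero, by simpa using h⟩
  set w := -(s - a i + a j * (e - 1)) / a i
  let y : ι → K := fun l => if l = i then w else if l = j then e else 1
  have hsum : ∑ l ∈ V, a l * (y l - 1) = a i * (w - 1) + a j * (e - 1) := by
    rw [sum_eq_add_of_mem i j hi hj hij fun l _ hl => by simp [y, hl.1, hl.2]]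
    simp [y, hij.symm]
  refine ⟨y, fun l => ?_, ?_⟩
  · simp only [y]
    split_ifs
    exacts [div_ne_zero (neg_ne_zero.mpr hr) (ha i hi), he, one_ne_zero]
  · have hy : ∑ l ∈ V, a l * y l = s + ∑ l ∈ V, a l * (y l - 1) := by
      rw [← sum_add_distrib]; exact sum_congr rfl fun l _ => by ring
    have hw : a i * w = -(s - a i + a j * (e - 1)) := mul_div_cancel₀ _ (ha i hi)
    rw [hy, hsum]
    linear_combination hw

theorem exists_dvd_sum_castLE_of_support {p : ℕ} (hp : p.Prime) (hodd : Odd p)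
    {t u : ℕ} (htu : t ≤ u) (d : Fin t → ℤ) (hd : ∀ j, ¬ (p : ℤ) ∣ d j) (U : Finset (Fin u))
    (hU : #(U.filter fun i : Fin u => (i : ℕ) < t) ≠ 1) :
    ∃ x : Fin u → ℤ, (∀ i, i ∈ U ↔ ¬ (p : ℤ) ∣ x i) ∧
      (p : ℤ) ∣ ∑ j : Fin t, d j * x (Fin.castLE htu j) := by
  have : Fact p.Prime := ⟨hp⟩
  have h2 : (2 : ZMod p) ≠ 0 :=
    Ring.two_ne_zero <| by
      rw [ZMod.ringChar_zmod_n]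
      rintro rfl
      exact Nat.not_odd_iff_even.mpr even_two hodd
  let a : Fin u → ZMod p := fun i => if h : (i : ℕ) < t then (d ⟨i, h⟩ : ZMod p) else 0
  have ha : ∀ i ∈ U.filter (fun i : Fin u => (i : ℕ) < t), a i ≠ 0 := by
    intro i hi
    simp only [a, dif_pos (mem_filter.mp hi).2, ne_eq, ZMod.intCast_zmod_eq_zero_iff_dvd]
    exact hd _
  obtain ⟨y, hy0, hy⟩ := exists_forall_ne_zero_sum_mul_eq_zero h2 ha hU
  let x : Fin u → ℤ := fun i => if i ∈ U then (y i).valMinAbs else p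
  have hx : ∀ i, (x i : ZMod p) = if i ∈ U then y i else 0 := by
    intro i
    by_cases hi : i ∈ U <;> simp [x, hi, ZMod.coe_valMinAbs]
  refine ⟨x, fun i => ?_, ?_⟩
  · rw [← ZMod.intCast_zmod_eq_zero_iff_dvd, hx]
    by_cases hi : i ∈ U <;> simp [hi, hy0]
  · rw [← ZMod.intCast_zmod_eq_zero_iff_dvd]
    push_cast
    rw [Fintype.sum_of_injective (Fin.castLE htu) (Fin.castLE_injective htu) _
      (fun i => a i * (x i : ZMod p)) ?_ fun j => by simp [a]]
    · simp_rw [hx, mul_ite, mul_zero, sum_ite_mem, univ_inter]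
      rw [← hy, sum_filter_of_ne]
      intro i _ hi
      by_contra h
      simp [a, h] at hi
    · rintro i hi
      have : ¬ (i : ℕ) < t := fun h => hi ⟨⟨i, h⟩, rfl⟩
      simp [a, this]

theorem not_dvd_mul_pow_sub_mul_pow {p : ℕ} (hp : p.Prime) {k : ℕ} (hk : 2 ≤ k)
    {a b x y D E : ℤ} (ha : ¬ (p : ℤ) ∣ a) (hx : ¬ (p : ℤ) ∣ x) (hE : ¬ (p : ℤ) ∣ E)
    (hy : (p : ℤ) ∣ y) : ¬ (p : ℤ) ∣ a * x ^ (k - 1) * E - b * y ^ (k - 1) * D := by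
  have : Fact p.Prime := ⟨hp⟩
  simp_rw [← ZMod.intCast_zmod_eq_zero_iff_dvd] at *
  push_cast
  rw [hy, zero_pow (by omega), mul_zero, zero_mul, sub_zero]
  exact mul_ne_zero (mul_ne_zero ha (pow_ne_zero _ hx)) hE

theorem exists_sum_eq_of_three_le {p : ℕ} (hp : p.Prime) {u : ℕ} (hu : p ^ 2 + 2 ≤ u)
    (c : Fin u → ℤ) (hc : ∀ i, ¬ (p : ℤ) ∣ c i) (r : ZMod (p ^ 2)) :
    ∃ S : Finset (Fin u), (∀ i ∈ S, 3 ≤ (i : ℕ)) ∧ ∑ i ∈ S, (c i : ZMod (p ^ 2)) = r := by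
  have : NeZero (p ^ 2) := ⟨pow_ne_zero 2 hp.ne_zero⟩
  have hp2 : 4 ≤ p ^ 2 := Nat.pow_le_pow_left hp.two_le 2
  have hcard : p ^ 2 ≤ #(Ici (⟨3, by omega⟩ : Fin u)) + 1 := by
    rw [Fin.card_Ici, Fin.val_mk]; omega
  obtain ⟨S, hS, hSr⟩ := ZMod.exists_subset_sum_eq_s14 _
    (fun i _ => ZMod.isUnit_intCast_of_not_dvd hp 2 (hc i)) hcard r
  exact ⟨S, fun i hi => Fin.le_iff_val_le_val.mp (mem_Ici.mp (hS hi)), hSr⟩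

theorem exists_support_sum_eq_zero {p : ℕ} (hp : p.Prime) {t u : ℕ} (hu : p ^ 2 + 2 ≤ u)
    (c : Fin u → ℤ) (hc : ∀ i, ¬ (p : ℤ) ∣ c i) :
    ∃ U : Finset (Fin u), (∀ i ∈ U, (i : ℕ) ≠ 0) ∧ U.Nonempty ∧
      ∑ i ∈ U, (c i : ZMod (p ^ 2)) = 0 ∧ #(U.filter fun i : Fin u => (i : ℕ) < t) ≠ 1 := by
  have hp2 : 4 ≤ p ^ 2 := Nat.pow_le_pow_left hp.two_le 2
  let i₁ : Fin u := ⟨1, by omega⟩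
  let i₂ : Fin u := ⟨2, by omega⟩
  -- `U ∩ [0, t)` must not be a single index: take it to be `{1, 2, …}` or empty
  by_cases ht : 3 ≤ t
  · obtain ⟨S, hS, hsum⟩ := exists_sum_eq_of_three_le hp hu c hc (-(c i₁ + c i₂))
    have hi₂ : i₂ ∉ S := fun h => by have := hS _ h; simp [i₂] at this
    have hi₁ : i₁ ∉ insert i₂ S := by
      simp only [mem_insert, not_or]
      exact ⟨by simp [i₁, i₂, Fin.ext_iff], fun h => by have := hS _ h; simp [i₁] at this⟩
    refine ⟨insert i₁ (insert i₂ S), fun i hi => ?_, insert_nonempty _ _, ?_, ?_⟩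
    · rcases mem_insert.mp hi with rfl | hi
      · simp [i₁]
      rcases mem_insert.mp hi with rfl | hi
      · simp [i₂]
      · have := hS i hi; omega
    · rw [sum_insert hi₁, sum_insert hi₂, hsum]; ring
    · have hsub : {i₁, i₂} ⊆ (insert i₁ (insert i₂ S)).filter fun i : Fin u => (i : ℕ) < t := by
        simp only [insert_subset_iff, mem_filter, mem_insert, true_or, or_true, true_and,
          singleton_subset_iff, i₁, i₂]
        omega
      have := card_le_card hsub
      rw [card_pair (by simp [i₁, i₂, Fin.ext_iff])] at this
      omega
  · obtain ⟨S, hS, hsum⟩ := exists_sum_eq_of_three_le hp hu c hc (-c i₂)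
    have hi₂ : i₂ ∉ S := fun h => by have := hS _ h; simp [i₂] at this
    have hge : ∀ i ∈ insert i₂ S, 2 ≤ (i : ℕ) := fun i hi => by
      rcases mem_insert.mp hi with rfl | hi
      · simp [i₂]
      · have := hS i hi; omega
    refine ⟨insert i₂ S, fun i hi => by have := hge i hi; omega, insert_nonempty _ _, ?_, ?_⟩
    · rw [sum_insert hi₂, hsum, add_neg_cancel]
    · rw [filter_false_of_mem fun i hi => by have := hge i hi; omega, card_empty]
      exact zero_ne_one

theorem stmt_14 (p : ℕ) (hp : p.Prime) (hodd : Odd p) (k : ℕ) (hk : k = p * (p - 1))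
    (t u : ℕ) (ht : 1 ≤ t) (htu : t ≤ u) (hu : p ^ 2 + 2 ≤ u)
    (c : Fin u → ℤ) (d : Fin t → ℤ)
    (hc : ∀ i, ¬ (p : ℤ) ∣ c i) (hd : ∀ j, ¬ (p : ℤ) ∣ d j) :
    ∃ x : Fin u → ℤ,
      ((p : ℤ) ^ 2 ∣ ∑ i, c i * x i ^ k) ∧
      ((p : ℤ) ∣ ∑ j : Fin t, d j * x (Fin.castLE htu j)) ∧
      ∃ i j : Fin u, ¬ (p : ℤ) ∣
        (c i * x i ^ (k - 1) * (if h : (j : ℕ) < t then d ⟨j, h⟩ else 0) -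
         c j * x j ^ (k - 1) * (if h : (i : ℕ) < t then d ⟨i, h⟩ else 0)) := by
  subst hk
  obtain ⟨U, hU0, ⟨i, hi⟩, hsum, hcard⟩ := exists_support_sum_eq_zero (t := t) hp hu c hc
  obtain ⟨x, hxU, hlin⟩ :=
    exists_dvd_sum_castLE_of_support hp hodd htu d hd U hcard
  let j₀ : Fin u := ⟨0, by omega⟩
  have hj₀ : (p : ℤ) ∣ x j₀ := not_not.mp fun h => hU0 j₀ ((hxU j₀).mpr h) rfl
  refine ⟨x, sq_dvd_sum_mul_pow_of_support hp c x U hxU hsum, hlin, i, j₀, ?_⟩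
  refine not_dvd_mul_pow_sub_mul_pow hp hp.two_le_mul_pred (hc i) ((hxU i).mp hi) ?_ hj₀
  rw [dif_pos (show (j₀ : ℕ) < t from ht)]
  exact hd _
end

section
/- Let p be an odd prime and k = p − 1. Consider the diagonal form F(x_1, …, x_{k²}) = ∑_{j=0}^{k−1} p^j ∑_{l=1}^{k} x_{jk+l}^k. Then the only solution of F(x) = 0 in ℤ_p^{k²} is x = 0. -/
/-!
Modulo `p`, Fermat gives `∑ a_i ^ (p-1) = #{i | a_i ≠ 0}`, so a sum of at most `p - 1` such
powers vanishes in `𝔽_p` only when every `a_i` does. Suppose `F(x) = 0` and that the blocks below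
`j` are divisible by `p`. Their contributions are then divisible by `p ^ k`, and those of the
blocks above `j` by `p ^ (j+1)`; as `j < k`, `p ^ (j+1)` divides `p ^ j` times the `j`-th block
sum, so this sum is `0` mod `p` and block `j` is divisible by `p`. Hence `x = p y` with
`F(y) = p ^ (-k) F(x) = 0`, and by descent every coordinate of `x` is divisible by every power
of `p`, i.e. is `0`.
-/

open Finset

theorem ZMod.eq_zero_of_sum_pow_card_sub_one_eq_zero {p : ℕ} [Fact p.Prime] {ι : Type*}
    [Fintype ι] (hι : Fintype.card ι < p) {a : ι → ZMod p} (h : ∑ i, a i ^ (p - 1) = 0) :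
    a = 0 := by
  classical
  simp only [ZMod.pow_card_sub_one, sum_boole, ZMod.natCast_eq_zero_iff] at h
  have hcard : #{i | a i ≠ 0} = 0 :=
    Nat.eq_zero_of_dvd_of_lt h ((card_filter_le _ _).trans_lt hι)
  simp only [card_eq_zero, filter_eq_empty_iff, mem_univ, true_implies, not_not] at hcard
  exact funext hcard

theorem eq_zero_of_forall_pow_dvd {α : Type*} [CommMonoidWithZero α] [IsCancelMulZero α]
    [WfDvdMonoid α] {a b : α} (ha : ¬IsUnit a) (h : ∀ n, a ^ n ∣ b) : b = 0 := by
  by_contra hb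
  exact FiniteMultiplicity.not_iff_forall.mpr h (.of_not_isUnit ha hb)

namespace PadicInt

variable {p : ℕ} [Fact p.Prime]

theorem toZMod_eq_zero_iff {z : ℤ_[p]} : toZMod z = 0 ↔ (p : ℤ_[p]) ∣ z := by
  rw [← RingHom.mem_ker, ker_toZMod, maximalIdeal_eq_span_p, Ideal.mem_span_singleton]

theorem dvd_of_dvd_sum_pow_sub_one {ι : Type*} [Fintype ι] (hι : Fintype.card ι < p)
    {y : ι → ℤ_[p]} (h : (p : ℤ_[p]) ∣ ∑ i, y i ^ (p - 1)) (i : ι) : (p : ℤ_[p]) ∣ y i := by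
  rw [← toZMod_eq_zero_iff] at h ⊢
  simp only [map_sum, map_pow] at h
  exact congrFun (ZMod.eq_zero_of_sum_pow_card_sub_one_eq_zero hι h) i

end PadicInt

/-- `x j l` stands for the variable `x_{jk+l+1}` of the informal statement. -/
noncomputable def davenportLewisForm (p k : ℕ) [Fact p.Prime] (x : Fin k → Fin k → ℤ_[p]) :
    ℤ_[p] :=
  ∑ j : Fin k, (p : ℤ_[p]) ^ (j : ℕ) * ∑ l : Fin k, x j l ^ k

section DavenportLewis

variable {p : ℕ} [Fact p.Prime] {k : ℕ}

theorem davenportLewisForm_p_mul (x : Fin k → Fin k → ℤ_[p]) :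
    davenportLewisForm p k (fun j l => p * x j l) = p ^ k * davenportLewisForm p k x := by
  simp only [davenportLewisForm, mul_pow, mul_sum]
  exact sum_congr rfl fun _ _ => sum_congr rfl fun _ _ => by ring

theorem dvd_block_sum_of_davenportLewisForm_eq_zero {x : Fin k → Fin k → ℤ_[p]}
    (hx : davenportLewisForm p k x = 0) (j : Fin k)
    (hlow : ∀ j' < j, ∀ l, (p : ℤ_[p]) ∣ x j' l) : (p : ℤ_[p]) ∣ ∑ l, x j l ^ k := by
  unfold davenportLewisForm at hx
  have hothers : (p : ℤ_[p]) ^ ((j : ℕ) + 1) ∣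
      ∑ j' ∈ univ.erase j, (p : ℤ_[p]) ^ (j' : ℕ) * ∑ l, x j' l ^ k := by
    refine dvd_sum fun j' hj' => ?_
    rcases lt_or_gt_of_ne (ne_of_mem_erase hj') with hlt | hgt
    · refine dvd_mul_of_dvd_right ((pow_dvd_pow _ j.isLt).trans ?_) _
      exact dvd_sum fun l _ => pow_dvd_pow_of_dvd (hlow j' hlt l) k
    · exact dvd_mul_of_dvd_left (pow_dvd_pow _ hgt) _
  have hj : (p : ℤ_[p]) ^ (j : ℕ) * p ∣ (p : ℤ_[p]) ^ (j : ℕ) * ∑ l, x j l ^ k := by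
    rw [← pow_succ, ← dvd_add_left hothers,
      add_sum_erase univ (fun j' : Fin k => (p : ℤ_[p]) ^ (j' : ℕ) * ∑ l, x j' l ^ k) (mem_univ j),
      hx]
    exact dvd_zero _
  exact (mul_dvd_mul_iff_left (pow_ne_zero _ PadicInt.prime_p.ne_zero)).mp hj

theorem dvd_of_davenportLewisForm_eq_zero (hk : k = p - 1) {x : Fin k → Fin k → ℤ_[p]}
    (hx : davenportLewisForm p k x = 0) (j l : Fin k) : (p : ℤ_[p]) ∣ x j l := by
  subst hk
  induction j using WellFoundedLT.induction generalizing l with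
  | _ j ih =>
    exact PadicInt.dvd_of_dvd_sum_pow_sub_one (by simp [(Fact.out : p.Prime).pos])
      (dvd_block_sum_of_davenportLewisForm_eq_zero hx j ih) l

theorem pow_dvd_of_davenportLewisForm_eq_zero (hk : k = p - 1) (n : ℕ) :
    ∀ {x : Fin k → Fin k → ℤ_[p]}, davenportLewisForm p k x = 0 →
      ∀ j l, (p : ℤ_[p]) ^ n ∣ x j l := by
  induction n with
  | zero => simp
  | succ n ih =>
    intro x hx j l
    choose y hy using dvd_of_davenportLewisForm_eq_zero hk hx
    obtain rfl : x = fun j l => p * y j l := funext₂ hy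
    rw [davenportLewisForm_p_mul] at hx
    have hy0 := (mul_eq_zero.mp hx).resolve_left (pow_ne_zero _ PadicInt.prime_p.ne_zero)
    rw [pow_succ']
    exact mul_dvd_mul_left _ (ih hy0 j l)

theorem eq_zero_of_davenportLewisForm_eq_zero (hk : k = p - 1) {x : Fin k → Fin k → ℤ_[p]}
    (hx : davenportLewisForm p k x = 0) : x = 0 :=
  funext₂ fun j l => eq_zero_of_forall_pow_dvd PadicInt.prime_p.not_isUnit
    fun n => pow_dvd_of_davenportLewisForm_eq_zero hk n hx j l

end DavenportLewis

theorem stmt_19_general (p : ℕ) [Fact p.Prime] (k : ℕ) (hk : k = p - 1)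
    (x : Fin (k * k) → ℤ_[p])
    (hx : ∑ j : Fin k, (p : ℤ_[p]) ^ (j : ℕ) *
            ∑ l : Fin k, (x (finProdFinEquiv (j, l))) ^ k = 0) :
    x = 0 := by
  have h : (fun j l => x (finProdFinEquiv (j, l))) = 0 :=
    eq_zero_of_davenportLewisForm_eq_zero hk hx
  funext i
  rw [← finProdFinEquiv.apply_symm_apply i]
  exact congrFun₂ h _ _

theorem stmt_19 (p : ℕ) [Fact p.Prime] (hodd : Odd p) (k : ℕ) (hk : k = p - 1)
    (x : Fin (k * k) → ℤ_[p])
    (hx : ∑ j : Fin k, (p : ℤ_[p]) ^ (j : ℕ) *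
            ∑ l : Fin k, (x (finProdFinEquiv (j, l))) ^ k = 0) :
    x = 0 :=
  stmt_19_general p k hk x hx
end
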